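/- arXiv:2211.16541 — 3 statements merged into one kernel-verified Lean document; each statement's English description precedes it below -/
import Mathlib

section
/- Let a, b > 0, set ℓ_{2n} = a·log(n+1) + b·log n and ℓ_{2n+1} = (a+b)·log(n+1), and define σ_n = ℓ_n − ℓ_{n-1} + ℓ_{n-2} − ⋯ + (−1)^{n-1}ℓ_1 (alternating sum, with ℓ_1 = 0 say, or starting the sum at n = 2). Then the series Σ_{n} exp(−σ_n/2) diverges if and only if min(a, b) ≤ 2. -/
/-- For `a, b > 0`, cuff lengths `ℓ (2n) = a * log (n+1) + b * log n`,
`ℓ (2n+1) = (a+b) * log (n+1)` (with `ℓ 1 = 0`), and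
`σ n = ℓ n - ℓ (n-1) + ⋯ + (-1)^(n-1) ℓ 1` the alternating sum,
the series `Σ exp (-σ n / 2)` diverges if and only if `min a b ≤ 2`. -/
theorem hakobyan_slice_divergence (a b : ℝ) (ha : 0 < a) (hb : 0 < b)
    (ℓ σ : ℕ → ℝ) (hℓ1 : ℓ 1 = 0)
    (h2 : ∀ n : ℕ, 1 ≤ n → ℓ (2 * n) = a * Real.log (n + 1) + b * Real.log n)
    (h21 : ∀ n : ℕ, 1 ≤ n → ℓ (2 * n + 1) = (a + b) * Real.log (n + 1))
    (hσ : ∀ n : ℕ, σ n = ∑ k ∈ Finset.Icc 1 n, (-1 : ℝ) ^ (n - k) * ℓ k) :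
    ¬ Summable (fun n : ℕ => Real.exp (-σ (n + 1) / 2)) ↔ min a b ≤ 2 := by
  -- recursion σ (n+1) = ℓ (n+1) - σ n
  have hrec : ∀ n : ℕ, σ (n + 1) = ℓ (n + 1) - σ n := by
    intro n
    rw [hσ, hσ, Finset.sum_Icc_succ_top (by omega : 1 ≤ n + 1)]
    have hc : ∀ k ∈ Finset.Icc 1 n,
        (-1 : ℝ) ^ (n + 1 - k) * ℓ k = -((-1 : ℝ) ^ (n - k) * ℓ k) := by
      intro k hk
      have hk' : k ≤ n := (Finset.mem_Icc.mp hk).2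
      have he : n + 1 - k = (n - k) + 1 := by omega
      rw [he, pow_succ]; ring
    rw [Finset.sum_congr rfl hc, Finset.sum_neg_distrib]
    simp
    ring
  -- closed form of σ
  have key : ∀ m : ℕ, σ (2 * m) = a * Real.log (m + 1) ∧
      σ (2 * m + 1) = b * Real.log (m + 1) := by
    intro m
    induction m with
    | zero =>
      have h0 : σ 0 = 0 := by rw [hσ]; simp
      have h1 : σ 1 = 0 := by
        have := hrec 0; rw [this, h0, hℓ1]; ring
      constructor
      · simpa using h0
      · simpa using h1
    | succ m ih =>
      have hev : σ (2 * (m + 1)) = a * Real.log ((m + 1 : ℕ) + 1) := by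
        have hr := hrec (2 * m + 1)
        have h2' := h2 (m + 1) (by omega)
        have heq : 2 * m + 1 + 1 = 2 * (m + 1) := by omega
        rw [heq] at hr
        rw [hr, h2', ih.2]
        push_cast
        ring
      refine ⟨hev, ?_⟩
      have hr := hrec (2 * (m + 1))
      have h21' := h21 (m + 1) (by omega)
      rw [hr, h21', hev]
      push_cast
      ring
  set f : ℕ → ℝ := fun n => Real.exp (-σ (n + 1) / 2) with hf
  have hfe : ∀ m : ℕ, f (2 * m) = ((m : ℝ) + 1) ^ (-(b / 2)) := by
    intro m
    have hs := (key m).2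
    have : f (2 * m) = Real.exp (-σ (2 * m + 1) / 2) := rfl
    rw [this, hs, Real.rpow_def_of_pos (by positivity)]
    congr 1
    ring
  have hfo : ∀ m : ℕ, f (2 * m + 1) = ((m : ℝ) + 2) ^ (-(a / 2)) := by
    intro m
    have hs := (key (m + 1)).1
    have heq : 2 * m + 1 + 1 = 2 * (m + 1) := by omega
    have : f (2 * m + 1) = Real.exp (-σ (2 * (m + 1)) / 2) := by
      rw [hf]; simp only [heq]
    rw [this, hs, Real.rpow_def_of_pos (by positivity)]
    push_cast
    congr 1
    ring
  -- summability of the even-indexed part ↔ 2 < b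
  have hb' : (Summable fun m : ℕ => f (2 * m)) ↔ 2 < b := by
    rw [funext hfe]
    have h1 : (Summable fun m : ℕ => ((m : ℝ) + 1) ^ (-(b / 2))) ↔
        Summable fun m : ℕ => ((m : ℝ)) ^ (-(b / 2)) := by
      have h0 := summable_nat_add_iff (f := fun n : ℕ => ((n : ℝ)) ^ (-(b / 2))) 1
      push_cast at h0
      exact h0
    rw [h1, Real.summable_nat_rpow]
    constructor <;> intro h <;> linarith
  have ha' : (Summable fun m : ℕ => f (2 * m + 1)) ↔ 2 < a := by
    rw [funext hfo]
    have h1 : (Summable fun m : ℕ => ((m : ℝ) + 2) ^ (-(a / 2))) ↔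
        Summable fun m : ℕ => ((m : ℝ)) ^ (-(a / 2)) := by
      have h0 := summable_nat_add_iff (f := fun n : ℕ => ((n : ℝ)) ^ (-(a / 2))) 2
      push_cast at h0
      exact h0
    rw [h1, Real.summable_nat_rpow]
    constructor <;> intro h <;> linarith
  have hsum : Summable f ↔ (2 < a ∧ 2 < b) := by
    constructor
    · intro h
      refine ⟨ha'.mp ?_, hb'.mp ?_⟩
      · exact h.comp_injective (fun x y hxy => by omega)
      · exact h.comp_injective (fun x y hxy => by omega)
    · rintro ⟨hA, hB⟩
      exact Summable.even_add_odd (hb'.mpr hB) (ha'.mpr hA)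
  rw [hsum]
  rw [min_le_iff]
  constructor
  · intro h
    by_contra hc
    push_neg at hc
    exact h ⟨by linarith [hc.1], by linarith [hc.2]⟩
  · rintro (h | h) ⟨hA, hB⟩ <;> linarith
end

section
/- Let (ℓ_n) be an increasing sequence of positive reals, and define σ_n = ℓ_n − ℓ_{n-1} + ⋯ + (−1)^{n-1}ℓ_1. If Σ_{n=1}^∞ exp(−ℓ_n/4) = ∞ and additionally the sequence (ℓ_n) is concave (ℓ_{n+1} − ℓ_n ≤ ℓ_n − ℓ_{n-1}), then Σ_{n=1}^∞ exp(−σ_n/2) = ∞. -/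
/-- For an increasing concave sequence of positive reals `ℓ n` (indices `n ≥ 1`) with
alternating sums `σ n = ℓ n - ℓ (n-1) + ⋯ + (-1)^(n-1) ℓ 1`: if `Σ exp (-ℓ n / 4) = ∞`
then `Σ exp (-σ n / 2) = ∞`. -/
theorem concave_divergence (ℓ σ : ℕ → ℝ)
    (hpos : ∀ n : ℕ, 1 ≤ n → 0 < ℓ n)
    (hmono : ∀ n : ℕ, 1 ≤ n → ℓ n ≤ ℓ (n + 1))
    (hconc : ∀ n : ℕ, 2 ≤ n → ℓ (n + 1) - ℓ n ≤ ℓ n - ℓ (n - 1))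
    (hσ : ∀ n : ℕ, σ n = ∑ k ∈ Finset.Icc 1 n, (-1 : ℝ) ^ (n - k) * ℓ k)
    (hdiv : ¬ Summable (fun n : ℕ => Real.exp (-(ℓ (n + 1)) / 4))) :
    ¬ Summable (fun n : ℕ => Real.exp (-σ (n + 1) / 2)) := by
  -- recursion: σ (n+1) = ℓ (n+1) - σ n  for n ≥ 1
  have hrec : ∀ n : ℕ, 1 ≤ n → σ (n + 1) = ℓ (n + 1) - σ n := by
    intro n hn
    rw [hσ (n + 1), hσ n]
    rw [Finset.sum_Icc_succ_top (by omega : 1 ≤ n + 1)]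
    have : ∀ k ∈ Finset.Icc 1 n, (-1 : ℝ) ^ (n + 1 - k) * ℓ k
        = -((-1 : ℝ) ^ (n - k) * ℓ k) := by
      intro k hk
      simp only [Finset.mem_Icc] at hk
      have : n + 1 - k = (n - k) + 1 := by omega
      rw [this, pow_succ]
      ring
    rw [Finset.sum_congr rfl this, Finset.sum_neg_distrib]
    simp
    ring
  have hσ1 : σ 1 = ℓ 1 := by rw [hσ 1]; simp
  -- key bound: σ (n+1) ≤ (ℓ (n+1) + ℓ 2) / 2
  have key : ∀ n : ℕ, σ (n + 1) ≤ (ℓ (n + 1) + ℓ 2) / 2 := by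
    intro n
    induction n using Nat.strong_induction_on with
    | _ n ih =>
      match n with
      | 0 =>
        rw [hσ1]
        have := hmono 1 le_rfl
        linarith
      | 1 =>
        rw [hrec 1 le_rfl, hσ1]
        have := (hpos 1 le_rfl)
        linarith
      | (m + 2) =>
        have h1 : σ (m + 3) = ℓ (m + 3) - ℓ (m + 2) + σ (m + 1) := by
          rw [hrec (m + 2) (by omega), hrec (m + 1) (by omega)]
          ring
        have hc := hconc (m + 2) (by omega)
        simp only [show m + 2 - 1 = m + 1 by omega] at hc
        have ihm := ih m (by omega)
        rw [h1]
        have hc' : ℓ (m + 2 + 1) - ℓ (m + 2) ≤ ℓ (m + 2) - ℓ (m + 1) := hc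
        linarith
  intro hs
  apply hdiv
  have : ∀ n : ℕ, Real.exp (-(ℓ (n + 1)) / 4)
      ≤ Real.exp (ℓ 2 / 4) * Real.exp (-σ (n + 1) / 2) := by
    intro n
    rw [← Real.exp_add]
    apply Real.exp_le_exp.2
    have := key n
    linarith
  exact Summable.of_nonneg_of_le (fun n => (Real.exp_pos _).le) this (hs.mul_left _)
end

section
/- Let a, b > 0 with min(a,b) > 2, set ℓ_{2n} = a·log(n+1) + b·log n, ℓ_{2n+1} = (a+b)·log(n+1), and σ_n the alternating partial sum of (ℓ_n). Then Σ_{n=1}^∞ exp(−σ_n/2) < ∞. -/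
/-- For `a, b > 0` with `min a b > 2`, the cuff lengths of the Hakobyan slice with
`ℓ 1 = 0` and alternating sums `σ n` satisfy `Σ exp (-σ n / 2) < ∞`. -/
theorem hakobyan_slice_convergence (a b : ℝ) (ha : 0 < a) (hb : 0 < b)
    (hmin : 2 < min a b)
    (ℓ σ : ℕ → ℝ) (hℓ1 : ℓ 1 = 0)
    (h2 : ∀ n : ℕ, 1 ≤ n → ℓ (2 * n) = a * Real.log (n + 1) + b * Real.log n)
    (h21 : ∀ n : ℕ, 1 ≤ n → ℓ (2 * n + 1) = (a + b) * Real.log (n + 1))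
    (hσ : ∀ n : ℕ, σ n = ∑ k ∈ Finset.Icc 1 n, (-1 : ℝ) ^ (n - k) * ℓ k) :
    Summable (fun n : ℕ => Real.exp (-σ (n + 1) / 2)) := by
  set p : ℝ := min a b / 2 with hp_def
  have hp : 1 < p := by simp only [hp_def]; linarith
  have hpa : p ≤ a / 2 := by
    have := min_le_left a b; simp only [hp_def]; linarith
  have hpb : p ≤ b / 2 := by
    have := min_le_right a b; simp only [hp_def]; linarith
  -- recurrence
  have hrec : ∀ n : ℕ, σ (n + 1) = ℓ (n + 1) - σ n := by
    intro n
    rw [hσ, hσ]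
    rw [Finset.sum_Icc_succ_top (by omega : 1 ≤ n + 1)]
    have hcongr : ∀ k ∈ Finset.Icc 1 n,
        (-1 : ℝ) ^ (n + 1 - k) * ℓ k = -((-1 : ℝ) ^ (n - k) * ℓ k) := by
      intro k hk
      simp only [Finset.mem_Icc] at hk
      rw [show n + 1 - k = (n - k) + 1 by omega, pow_succ]
      ring
    rw [Finset.sum_congr rfl hcongr, Finset.sum_neg_distrib]
    simp
    ring
  have hσ1 : σ 1 = 0 := by
    rw [hσ]; simp [hℓ1]
  -- explicit values
  have key : ∀ m : ℕ, σ (2 * m + 1) = b * Real.log (m + 1) ∧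
      (1 ≤ m → σ (2 * m) = a * Real.log (m + 1)) := by
    intro m
    induction m with
    | zero => refine ⟨by simpa using hσ1, by omega⟩
    | succ m ih =>
      have hodd := ih.1
      have heven : σ (2 * (m + 1)) = a * Real.log ((m : ℝ) + 1 + 1) := by
        have : 2 * (m + 1) = (2 * m + 1) + 1 := by ring
        rw [this, hrec, show (2 * m + 1) + 1 = 2 * (m + 1) by ring,
          h2 (m + 1) (by omega), hodd]
        push_cast
        ring
      constructor
      · have : 2 * (m + 1) + 1 = (2 * (m + 1)) + 1 := rfl
        rw [hrec, heven, h21 (m + 1) (by omega)]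
        push_cast
        ring
      · intro _
        rw [heven]; push_cast; ring
  -- the bound
  have hbound : ∀ n : ℕ,
      Real.exp (-σ (n + 1) / 2) ≤ (2 : ℝ) ^ p * ((n : ℝ) + 2) ^ (-p) := by
    intro n
    rcases Nat.even_or_odd n with ⟨m, hm⟩ | ⟨m, hm⟩
    · -- n = 2m, n+1 = 2m+1, σ = b log (m+1)
      have hσv : σ (n + 1) = b * Real.log ((m : ℝ) + 1) := by
        rw [hm, show m + m + 1 = 2 * m + 1 by ring]; exact (key m).1
      have hm1 : (0 : ℝ) < (m : ℝ) + 1 := by positivity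
      have h1 : Real.exp (-σ (n + 1) / 2) = ((m : ℝ) + 1) ^ (-(b / 2)) := by
        rw [hσv, Real.rpow_def_of_pos hm1]
        congr 1
        rw [Real.log]  -- no-op safeguard
        ring
      rw [h1]
      have step1 : ((m : ℝ) + 1) ^ (-(b / 2)) ≤ ((m : ℝ) + 1) ^ (-p) :=
        Real.rpow_le_rpow_of_exponent_le (by linarith) (by linarith)
      have step2 : ((m : ℝ) + 1) ^ (-p) = (2 : ℝ) ^ p * ((n : ℝ) + 2) ^ (-p) := by
        have hn2 : (n : ℝ) + 2 = 2 * ((m : ℝ) + 1) := by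
          rw [hm]; push_cast; ring
        rw [hn2, Real.mul_rpow (by norm_num) (le_of_lt hm1),
          Real.rpow_neg (by norm_num : (0:ℝ) ≤ 2)]
        field_simp
      rw [step2] at step1; exact step1
    · -- n = 2m+1, n+1 = 2m+2 = 2(m+1), σ = a log (m+2)
      have hσv : σ (n + 1) = a * Real.log ((m : ℝ) + 1 + 1) := by
        rw [hm, show 2 * m + 1 + 1 = 2 * (m + 1) by ring]
        have := (key (m + 1)).2 (by omega)
        rw [this]; push_cast; ring
      have hm2 : (0 : ℝ) < (m : ℝ) + 1 + 1 := by positivity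
      have h1 : Real.exp (-σ (n + 1) / 2) = ((m : ℝ) + 2) ^ (-(a / 2)) := by
        rw [hσv, show (m : ℝ) + 1 + 1 = (m : ℝ) + 2 by ring,
          Real.rpow_def_of_pos (by positivity)]
        congr 1
        ring
      rw [h1]
      have step1 : ((m : ℝ) + 2) ^ (-(a / 2)) ≤ ((m : ℝ) + 2) ^ (-p) :=
        Real.rpow_le_rpow_of_exponent_le (by linarith) (by linarith)
      have step2 : ((m : ℝ) + 2) ^ (-p) ≤ (2 : ℝ) ^ p * ((n : ℝ) + 2) ^ (-p) := by
        have hn2 : (n : ℝ) + 2 = 2 * m + 3 := by rw [hm]; push_cast; ring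
        have hle : (n : ℝ) + 2 ≤ 2 * ((m : ℝ) + 2) := by rw [hn2]; linarith
        have hpos : (0 : ℝ) < (n : ℝ) + 2 := by positivity
        have : (2 * ((m : ℝ) + 2)) ^ (-p) ≤ ((n : ℝ) + 2) ^ (-p) :=
          Real.rpow_le_rpow_of_nonpos hpos hle (by linarith)
        calc ((m : ℝ) + 2) ^ (-p)
            = (2 : ℝ) ^ p * (2 * ((m : ℝ) + 2)) ^ (-p) := by
              rw [Real.mul_rpow (by norm_num) (by positivity),
                Real.rpow_neg (by norm_num : (0:ℝ) ≤ 2)]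
              field_simp
          _ ≤ (2 : ℝ) ^ p * ((n : ℝ) + 2) ^ (-p) := by
              have h2p : (0 : ℝ) ≤ (2 : ℝ) ^ p := by positivity
              exact mul_le_mul_of_nonneg_left this h2p
      linarith
  -- summability of the bound
  have hsum : Summable (fun n : ℕ => (2 : ℝ) ^ p * ((n : ℝ) + 2) ^ (-p)) := by
    have h0 : Summable (fun n : ℕ => (n : ℝ) ^ (-p)) :=
      Real.summable_nat_rpow.mpr (by linarith)
    have h1 : Summable (fun n : ℕ => ((n + 2 : ℕ) : ℝ) ^ (-p)) :=
      (summable_nat_add_iff 2).mpr h0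
    have h2' : Summable (fun n : ℕ => ((n : ℝ) + 2) ^ (-p)) := by
      convert h1 using 2 with n
      push_cast; ring
    exact h2'.mul_left _
  exact Summable.of_nonneg_of_le (fun n => (Real.exp_pos _).le) hbound hsum
end
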